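/- arXiv:1703.07503 — 7 statements merged into one kernel-verified Lean document; each statement's English description precedes it below -/
import Mathlib

section
/- Let f be a weakly decreasing, nonconstant, piecewise continuous function on [0,1] with f(1) = 0. Then the global location u(γ, f) converges to ∫₀¹ f(s) ds as γ tends to 0 from the right. -/
/-!
Under the uniform probability measure on `(0, 1]`, the two integrals in `uLoc γ f` are the moment
generating functions of `s ↦ s` and `s ↦ s - f s`, so `uLoc γ f` is the difference quotient at `0`
of the difference of their cumulant generating functions. Both variables are bounded because `f`
is monotone, so each cumulant generating function vanishes at `0` and has the mean as its
derivative there; the limit is therefore `∫ s - ∫ (s - f s) = ∫ f`.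
-/

open MeasureTheory Filter Set
open scoped Topology

/-- Piecewise continuity on `[0,1]`: continuity within `[0,1]` away from a finite set. -/
def PiecewiseContinuousOn (f : ℝ → ℝ) : Prop :=
  ∃ S : Finset ℝ, ∀ x ∈ Set.Icc (0:ℝ) 1, x ∉ S → ContinuousWithinAt f (Set.Icc (0:ℝ) 1) x

/-- The global location `u(γ, f)`. -/
noncomputable def uLoc (γ : ℝ) (f : ℝ → ℝ) : ℝ :=
  (1/γ) * Real.log ((∫ s in (0:ℝ)..1, Real.exp (γ * s)) /
    (∫ s in (0:ℝ)..1, Real.exp (γ * (s - f s))))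

/-- The limiting variance `σ²(γ, f)`. -/
noncomputable def sigmaSq (γ : ℝ) (f : ℝ → ℝ) : ℝ :=
  (1/(Real.exp γ - 1)^2) *
    ∫ s in (0:ℝ)..1,
      (Real.exp (2*γ*(uLoc γ f + s - f s)) - Real.exp (2*γ*s))

open Real ProbabilityTheory

namespace ProbabilityTheory

variable {Ω : Type*} {m : MeasurableSpace Ω} {μ : Measure Ω} {X : Ω → ℝ}

lemma integrableExpSet_eq_univ_of_mem_Icc [IsFiniteMeasure μ] {a b : ℝ} (hm : AEMeasurable X μ)
    (hb : ∀ᵐ ω ∂μ, X ω ∈ Icc a b) : integrableExpSet X μ = univ :=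
  eq_univ_of_forall fun _ => integrable_exp_mul_of_mem_Icc hm hb

lemma tendsto_cgf_div_nhdsNE_zero [IsProbabilityMeasure μ]
    (h : 0 ∈ interior (integrableExpSet X μ)) :
    Tendsto (fun t => cgf X μ t / t) (𝓝[≠] 0) (𝓝 μ[X]) := by
  have hderiv : HasDerivAt (cgf X μ) μ[X] 0 := by
    simpa [deriv_cgf_zero h] using (analyticAt_cgf h).differentiableAt.hasDerivAt
  simpa [cgf_zero, div_eq_inv_mul] using hasDerivAt_iff_tendsto_slope_zero.1 hderiv

end ProbabilityTheory

instance isProbabilityMeasure_restrict_Ioc_zero_one :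
    IsProbabilityMeasure (volume.restrict (Ioc (0:ℝ) 1)) :=
  ⟨by simp⟩

lemma log_intervalIntegral_exp_mul_eq_cgf (g : ℝ → ℝ) (γ : ℝ) :
    log (∫ s in (0:ℝ)..1, exp (γ * g s)) = cgf g (volume.restrict (Ioc 0 1)) γ := by
  rw [intervalIntegral.integral_of_le zero_le_one]; rfl

lemma tendsto_log_intervalIntegral_exp_mul_div {g : ℝ → ℝ} {a b : ℝ}
    (hm : AEMeasurable g (volume.restrict (Ioc 0 1)))
    (hb : ∀ᵐ s ∂volume.restrict (Ioc 0 1), g s ∈ Icc a b) :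
    Tendsto (fun γ => log (∫ s in (0:ℝ)..1, exp (γ * g s)) / γ) (𝓝[≠] 0)
      (𝓝 (∫ s in (0:ℝ)..1, g s)) := by
  simp_rw [log_intervalIntegral_exp_mul_eq_cgf, intervalIntegral.integral_of_le zero_le_one]
  exact tendsto_cgf_div_nhdsNE_zero (by simp [integrableExpSet_eq_univ_of_mem_Icc hm hb])

lemma intervalIntegral_exp_mul_pos {g : ℝ → ℝ} {a b : ℝ}
    (hm : AEMeasurable g (volume.restrict (Ioc 0 1)))
    (hb : ∀ᵐ s ∂volume.restrict (Ioc 0 1), g s ∈ Icc a b) (γ : ℝ) :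
    0 < ∫ s in (0:ℝ)..1, exp (γ * g s) := by
  rw [intervalIntegral.integral_of_le zero_le_one]
  exact mgf_pos (integrable_exp_mul_of_mem_Icc hm hb)

theorem uLoc_tendsto_of_gamma_to_zero_general (f : ℝ → ℝ)
    (hdec : AntitoneOn f (Set.Icc (0:ℝ) 1)) :
    Tendsto (fun γ : ℝ => uLoc γ f) (𝓝[>] 0)
      (𝓝 (∫ s in (0:ℝ)..1, f s)) := by
  have hf : IntervalIntegrable f volume 0 1 :=
    AntitoneOn.intervalIntegrable (by rwa [uIcc_of_le zero_le_one])
  have hfm : AEMeasurable f (volume.restrict (Ioc 0 1)) := hf.1.aemeasurable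
  have hs_mem : ∀ᵐ s ∂volume.restrict (Ioc 0 1), s ∈ Icc (0:ℝ) 1 :=
    ae_restrict_of_forall_mem measurableSet_Ioc fun s hs => Ioc_subset_Icc_self hs
  have hsub_mem : ∀ᵐ s ∂volume.restrict (Ioc 0 1), s - f s ∈ Icc (0 - f 0) (1 - f 1) := by
    filter_upwards [hs_mem] with s hs
    exact ⟨sub_le_sub hs.1 (hdec ⟨le_rfl, zero_le_one⟩ hs hs.1),
      sub_le_sub hs.2 (hdec hs ⟨zero_le_one, le_rfl⟩ hs.2)⟩
  have hsubm : AEMeasurable (fun s => s - f s) (volume.restrict (Ioc 0 1)) :=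
    aemeasurable_id'.sub hfm
  have hlim := (tendsto_log_intervalIntegral_exp_mul_div aemeasurable_id' hs_mem).sub
    (tendsto_log_intervalIntegral_exp_mul_div hsubm hsub_mem)
  rw [intervalIntegral.integral_sub (continuous_id'.intervalIntegrable 0 1) hf,
    sub_sub_cancel] at hlim
  refine (hlim.mono_left (nhdsGT_le_nhdsNE 0)).congr fun γ => ?_
  rw [uLoc, log_div (intervalIntegral_exp_mul_pos aemeasurable_id' hs_mem γ).ne'
    (intervalIntegral_exp_mul_pos hsubm hsub_mem γ).ne']
  ring

/-- the global location `u(γ,f)` converges to `∫₀¹ f(s) ds` as `γ → 0⁺`. -/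
theorem uLoc_tendsto_of_gamma_to_zero (f : ℝ → ℝ)
    (hdec : AntitoneOn f (Set.Icc (0:ℝ) 1))
    (hpc : PiecewiseContinuousOn f)
    (hnc : ∃ x ∈ Set.Icc (0:ℝ) 1, ∃ y ∈ Set.Icc (0:ℝ) 1, f x ≠ f y)
    (hf1 : f 1 = 0) :
    Tendsto (fun γ : ℝ => uLoc γ f) (𝓝[>] 0)
      (𝓝 (∫ s in (0:ℝ)..1, f s)) :=
  uLoc_tendsto_of_gamma_to_zero_general f hdec
end

section
/- Let f be a weakly decreasing, nonconstant, piecewise continuous function on [0,1] with f(1) = 0. Then the limiting variance σ²(γ, f) converges, as γ tends to 0 from the right, to ∫₀¹ f(s)² ds − ( ∫₀¹ f(s) ds )² + ∫₀¹ (1 − 2s) f(s) ds. -/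
open MeasureTheory Filter Set
open scoped Topology

/-!
With `g s = s - f s` and `K_X = cgf X` for the uniform law on `[0, 1]`, the identities
`e^{γ u} = mgf id / mgf g` and `e^γ - 1 = γ · mgf id γ` turn the variance into
`σ²(γ, f) = (exp (K_g(2γ) - 2K_g(γ)) - exp (K_id(2γ) - 2K_id(γ))) / γ²`.
Since `K_X(0) = 0` and `K_X''(0) = Var X`, each exponent is `γ² Var X + o(γ²)`, so
`σ² → Var g - Var id = Var f - 2 Cov(id, f)`, which is the stated limit.
-/

open ProbabilityTheory

theorem tendsto_div_sq_of_hasDerivAt {F F' : ℝ → ℝ} {c : ℝ}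
    (hF : ∀ᶠ x in 𝓝 0, HasDerivAt F (F' x) x) (hF' : HasDerivAt F' c 0)
    (hF0 : F 0 = 0) (hF'0 : F' 0 = 0) :
    Tendsto (fun x => F x / x ^ 2) (𝓝[≠] 0) (𝓝 (c / 2)) := by
  have hslope : Tendsto (fun x => F' x / (2 * x)) (𝓝[≠] 0) (𝓝 (c / 2)) := by
    have := hF'.tendsto_slope_zero.div_const 2
    simp only [zero_add, hF'0, sub_zero, smul_eq_mul] at this
    refine this.congr fun x => ?_
    rw [mul_comm 2 x, ← div_div, inv_mul_eq_div]
  have hFcont : Tendsto F (𝓝[≠] 0) (𝓝 0) := by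
    simpa [hF0] using hF.self_of_nhds.continuousAt.tendsto.mono_left nhdsWithin_le_nhds
  refine HasDerivAt.lhopital_zero_nhdsNE (eventually_nhdsWithin_of_eventually_nhds hF)
    (Eventually.of_forall fun x => by simpa using hasDerivAt_pow 2 x) ?_ hFcont ?_ hslope
  · filter_upwards [self_mem_nhdsWithin] with x hx using mul_ne_zero two_ne_zero hx
  · exact ((continuous_pow 2).tendsto' 0 0 (by simp)).mono_left nhdsWithin_le_nhds

theorem tendsto_exp_sub_one_div_sq {a : ℝ → ℝ} {α : ℝ}
    (ha : Tendsto (fun t => a t / t ^ 2) (𝓝[≠] 0) (𝓝 α)) :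
    Tendsto (fun t => (Real.exp (a t) - 1) / t ^ 2) (𝓝[≠] 0) (𝓝 α) := by
  have hsq : Tendsto (fun t : ℝ => t ^ 2) (𝓝[≠] 0) (𝓝 0) :=
    ((continuous_pow 2).tendsto' 0 0 (by simp)).mono_left nhdsWithin_le_nhds
  have ha0 : Tendsto a (𝓝[≠] 0) (𝓝 0) := by
    refine (mul_zero α ▸ ha.mul hsq).congr' ?_
    filter_upwards [self_mem_nhdsWithin] with t (ht : t ≠ 0)
    field_simp
  have hrem : Tendsto (fun t => (Real.exp (a t) - 1 - a t) / t ^ 2) (𝓝[≠] 0) (𝓝 0) := by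
    refine squeeze_zero_norm' ?_ (by simpa using ha.abs.mul ha0.abs)
    filter_upwards [ha0.eventually (Metric.closedBall_mem_nhds 0 one_pos)] with t ht
    rw [Real.dist_0_eq_abs] at ht
    rw [Real.norm_eq_abs, abs_div, abs_div, div_mul_eq_mul_div, abs_mul_abs_self, ← sq]
    exact div_le_div_of_nonneg_right (Real.abs_exp_sub_one_sub_id_le ht) (abs_nonneg _)
  refine (add_zero α ▸ ha.add hrem).congr fun t => ?_
  ring

theorem tendsto_exp_sub_exp_div_sq {a b : ℝ → ℝ} {α β : ℝ}
    (ha : Tendsto (fun t => a t / t ^ 2) (𝓝[≠] 0) (𝓝 α))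
    (hb : Tendsto (fun t => b t / t ^ 2) (𝓝[≠] 0) (𝓝 β)) :
    Tendsto (fun t => (Real.exp (a t) - Real.exp (b t)) / t ^ 2) (𝓝[≠] 0) (𝓝 (α - β)) :=
  ((tendsto_exp_sub_one_div_sq ha).sub (tendsto_exp_sub_one_div_sq hb)).congr fun t => by ring

theorem exp_sub_one_eq_mul_integral_exp_mul (γ : ℝ) :
    Real.exp γ - 1 = γ * ∫ s in (0:ℝ)..1, Real.exp (γ * s) := by
  rcases eq_or_ne γ 0 with rfl | hγ
  · simp
  rw [intervalIntegral.integral_comp_mul_left Real.exp hγ, integral_exp, smul_eq_mul,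
    mul_inv_cancel_left₀ hγ, mul_zero, mul_one, Real.exp_zero]

theorem MonotoneOn.integrableOn_exp_mul {g : ℝ → ℝ} {s : Set ℝ} (hs : IsCompact s)
    (hg : MonotoneOn g s) (t : ℝ) : IntegrableOn (fun x => Real.exp (t * g x)) s := by
  rcases le_total 0 t with ht | ht
  · refine MonotoneOn.integrableOn_isCompact hs fun x hx y hy hxy => ?_
    exact Real.exp_le_exp.2 (mul_le_mul_of_nonneg_left (hg hx hy hxy) ht)
  · refine AntitoneOn.integrableOn_isCompact hs fun x hx y hy hxy => ?_
    exact Real.exp_le_exp.2 (mul_le_mul_of_nonpos_left (hg hx hy hxy) ht)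

section Cumulant

variable {Ω : Type*} {mΩ : MeasurableSpace Ω} {μ : Measure Ω} {X : Ω → ℝ}

theorem zero_mem_interior_integrableExpSet_of_integrable
    (h : ∀ t, Integrable (fun ω => Real.exp (t * X ω)) μ) :
    0 ∈ interior (integrableExpSet X μ) := by
  rw [show integrableExpSet X μ = univ from eq_univ_of_forall h, interior_univ]
  exact mem_univ 0

theorem tendsto_cgf_two_mul_sub_div_sq [IsProbabilityMeasure μ]
    (h : 0 ∈ interior (integrableExpSet X μ)) :
    Tendsto (fun t => (cgf X μ (2 * t) - 2 * cgf X μ t) / t ^ 2) (𝓝[≠] 0)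
      (𝓝 (variance X μ)) := by
  set K := cgf X μ
  have hK : ∀ᶠ t in 𝓝 0, AnalyticAt ℝ K t :=
    (isOpen_interior.eventually_mem h).mono fun t ht => analyticAt_cgf ht
  have hmul : ∀ t : ℝ, HasDerivAt (fun t => 2 * t) 2 t := fun t => by
    simpa using (hasDerivAt_id t).const_mul (2:ℝ)
  have h2 : Tendsto (fun t : ℝ => 2 * t) (𝓝 0) (𝓝 0) := by
    simpa using (hmul 0).continuousAt.tendsto
  have hD : ∀ᶠ t in 𝓝 0, HasDerivAt (fun t => K (2 * t) - 2 * K t)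
      (2 * deriv K (2 * t) - 2 * deriv K t) t := by
    filter_upwards [hK, h2.eventually hK] with t ht ht2
    exact ((ht2.differentiableAt.hasDerivAt.comp t (hmul t)).sub
      (ht.differentiableAt.hasDerivAt.const_mul 2)).congr_deriv (by ring)
  have hK'' : HasDerivAt (deriv K) (iteratedDeriv 2 K 0) 0 := by
    rw [iteratedDeriv_succ, iteratedDeriv_one]
    exact (analyticAt_cgf h).deriv.differentiableAt.hasDerivAt
  have hD' : HasDerivAt (fun t => 2 * deriv K (2 * t) - 2 * deriv K t)
      (2 * iteratedDeriv 2 K 0) 0 :=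
    (((hK''.comp_of_eq 0 (hmul 0) (mul_zero 2).symm).const_mul 2).sub
      (hK''.const_mul 2)).congr_deriv (by ring)
  have hvar : iteratedDeriv 2 K 0 = variance X μ := by
    simpa using (variance_tilted_mul h).symm
  simpa [hvar] using tendsto_div_sq_of_hasDerivAt hD hD' (by simp [K]) (by simp)

end Cumulant

section UnitInterval

local notation "μ₀" => volume.restrict (Icc (0:ℝ) 1)

instance isProbabilityMeasure_restrict_Icc_zero_one : IsProbabilityMeasure μ₀ := ⟨by simp⟩

theorem intervalIntegral_zero_one_eq_integral (F : ℝ → ℝ) :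
    ∫ s in (0:ℝ)..1, F s = ∫ s, F s ∂μ₀ := by
  rw [intervalIntegral.integral_of_le zero_le_one, integral_Icc_eq_integral_Ioc]

theorem intervalIntegral_exp_mul_eq_mgf (X : ℝ → ℝ) (t : ℝ) :
    ∫ s in (0:ℝ)..1, Real.exp (t * X s) = mgf X μ₀ t :=
  intervalIntegral_zero_one_eq_integral _

theorem integrable_exp_mul_id (t : ℝ) : Integrable (fun s : ℝ => Real.exp (t * s)) μ₀ :=
  monotoneOn_id.integrableOn_exp_mul isCompact_Icc t

theorem sigmaSq_eq_exp_cgf_sub_exp_cgf (f : ℝ → ℝ)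
    (hf : ∀ t, Integrable (fun s => Real.exp (t * (s - f s))) μ₀) {γ : ℝ} (hγ : γ ≠ 0) :
    sigmaSq γ f =
      (Real.exp (cgf (fun s => s - f s) μ₀ (2 * γ) - 2 * cgf (fun s => s - f s) μ₀ γ)
        - Real.exp (cgf (fun s => s) μ₀ (2 * γ) - 2 * cgf (fun s => s) μ₀ γ)) / γ ^ 2 := by
  have hu : γ * uLoc γ f = cgf (fun s => s) μ₀ γ - cgf (fun s => s - f s) μ₀ γ := by
    rw [uLoc, intervalIntegral_exp_mul_eq_mgf (fun s => s), intervalIntegral_exp_mul_eq_mgf,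
      ← mul_assoc, mul_one_div_cancel hγ, one_mul,
      Real.log_div (mgf_pos (integrable_exp_mul_id γ)).ne' (mgf_pos (hf γ)).ne']
    rfl
  have hintegral : ∫ s in (0:ℝ)..1, (Real.exp (2*γ*(uLoc γ f + s - f s)) - Real.exp (2*γ*s))
      = Real.exp (2 * (γ * uLoc γ f)) * mgf (fun s => s - f s) μ₀ (2 * γ)
        - mgf (fun s => s) μ₀ (2 * γ) := by
    rw [intervalIntegral_zero_one_eq_integral, mgf, mgf, ← integral_const_mul,
      ← integral_sub ((hf _).const_mul _) (integrable_exp_mul_id _)]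
    congr 1 with s
    rw [← Real.exp_add]
    ring_nf
  rw [sigmaSq, hintegral, exp_sub_one_eq_mul_integral_exp_mul,
    intervalIntegral_exp_mul_eq_mgf (fun s => s), hu, ← exp_cgf (hf _),
    ← exp_cgf (integrable_exp_mul_id _), ← exp_cgf (integrable_exp_mul_id _)]
  generalize cgf (fun s => s) μ₀ γ = a, cgf (fun s => s - f s) μ₀ γ = b,
    cgf (fun s => s) μ₀ (2 * γ) = a₂, cgf (fun s => s - f s) μ₀ (2 * γ) = b₂
  have hexp_g :
      Real.exp (2 * (a - b)) * Real.exp b₂ = Real.exp (b₂ - 2 * b) * Real.exp a ^ 2 := by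
    rw [← Real.exp_add, ← Real.exp_nat_mul, ← Real.exp_add]
    ring_nf
  have hexp_id : Real.exp a₂ = Real.exp (a₂ - 2 * a) * Real.exp a ^ 2 := by
    rw [← Real.exp_nat_mul, ← Real.exp_add]
    ring_nf
  rw [hexp_g, hexp_id]
  field_simp

theorem variance_sub_sub_variance_id {f : ℝ → ℝ} (hf : MemLp f 2 μ₀) :
    Var[fun s => s - f s; μ₀] - Var[fun s => s; μ₀]
      = (∫ s in (0:ℝ)..1, (f s)^2) - (∫ s in (0:ℝ)..1, f s)^2
        + ∫ s in (0:ℝ)..1, (1 - 2*s) * f s := by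
  have hid : MemLp (fun s : ℝ => s) 2 μ₀ := monotoneOn_id.memLp_isCompact isCompact_Icc
  have hmean : ∫ s, s ∂μ₀ = 1 / 2 := by
    rw [← intervalIntegral_zero_one_eq_integral, integral_id]
    norm_num
  have hprod : Integrable (fun s => s * f s) μ₀ := hid.integrable_mul hf
  simp only [intervalIntegral_zero_one_eq_integral]
  rw [variance_fun_sub hid hf, covariance_eq_sub hid hf, variance_eq_sub hf,
    show (fun s => (1 - 2*s) * f s) = fun s => f s - 2 * (s * f s) by ext; ring,
    integral_sub (hf.integrable one_le_two) (hprod.const_mul 2),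
    integral_const_mul, hmean]
  simp only [Pi.mul_apply, Pi.pow_apply]
  ring

end UnitInterval

theorem sigmaSq_tendsto_of_gamma_to_zero_general (f : ℝ → ℝ)
    (hdec : AntitoneOn f (Set.Icc (0:ℝ) 1)) :
    Tendsto (fun γ : ℝ => sigmaSq γ f) (𝓝[>] 0)
      (𝓝 ((∫ s in (0:ℝ)..1, (f s)^2) - (∫ s in (0:ℝ)..1, f s)^2
          + ∫ s in (0:ℝ)..1, (1 - 2*s) * f s)) := by
  have hg : MonotoneOn (fun s => s - f s) (Icc 0 1) := fun x hx y hy hxy =>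
    sub_le_sub hxy (hdec hx hy hxy)
  have hint_g := hg.integrableOn_exp_mul isCompact_Icc
  rw [← variance_sub_sub_variance_id (hdec.memLp_isCompact isCompact_Icc)]
  have hlim := tendsto_exp_sub_exp_div_sq
    (tendsto_cgf_two_mul_sub_div_sq <| zero_mem_interior_integrableExpSet_of_integrable hint_g)
    (tendsto_cgf_two_mul_sub_div_sq <|
      zero_mem_interior_integrableExpSet_of_integrable integrable_exp_mul_id)
  refine (hlim.mono_left (nhdsWithin_mono 0 fun γ (hγ : 0 < γ) => hγ.ne')).congr' ?_
  filter_upwards [self_mem_nhdsWithin] with γ (hγ : 0 < γ)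
  exact (sigmaSq_eq_exp_cgf_sub_exp_cgf f hint_g hγ.ne').symm

/-- the limiting variance `σ²(γ,f)` converges, as `γ → 0⁺`, to
`∫₀¹ f² − (∫₀¹ f)² + ∫₀¹ (1−2s) f(s) ds`. -/
theorem sigmaSq_tendsto_of_gamma_to_zero (f : ℝ → ℝ)
    (hdec : AntitoneOn f (Set.Icc (0:ℝ) 1))
    (hpc : PiecewiseContinuousOn f)
    (hnc : ∃ x ∈ Set.Icc (0:ℝ) 1, ∃ y ∈ Set.Icc (0:ℝ) 1, f x ≠ f y)
    (hf1 : f 1 = 0) :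
    Tendsto (fun γ : ℝ => sigmaSq γ f) (𝓝[>] 0)
      (𝓝 ((∫ s in (0:ℝ)..1, (f s)^2) - (∫ s in (0:ℝ)..1, f s)^2
          + ∫ s in (0:ℝ)..1, (1 - 2*s) * f s)) :=
  sigmaSq_tendsto_of_gamma_to_zero_general f hdec
end

section
/- Fix γ > 0, an integer m ≥ 2, reals 0 = s₀ < s₁ < … < s_m = 1 and α₁ > α₂ > … > α_m = 0, and let u, N_m, D_m be as defined. Then every complex solution w of the equation N_m(w) = D_m(w) is real, and every solution other than w = 0 lies in the real segment [ e^{−γ(u+1)}, e^{−γ(u−α₁)} ]. -/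
/-!
With `z = 1/w` the equation `N_m(w) = D_m(w)` becomes `A(z) = B(z)` for the monic polynomials
`A = (z - e^γ) ∏ (z - a_j)` and `B = (z - 1) ∏ (z - b_j)`, whose roots
`a_j = e^{γ(u - α_j + s_{j-1})} < b_j = e^{γ(u - α_j + s_j)} < a_{j+1}` interlace.
The choice of `u` makes the root sums of `A` and `B` agree and the telescoping `∑ (s_j - s_{j-1}) = 1`
makes their root products agree, so `A - B` has degree at most `m - 1` and vanishes at `0`.
At the nodes `b_j` we have `A - B = A`, whose sign alternates along `b_1 < … < b_m` except across
the at most one gap `(b_j, b_{j+1}]` containing `e^γ`; this yields `m - 2` further real roots in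
`[b_1, b_m]`, hence all roots of `A - B`.
-/

open MeasureTheory Filter Set
open scoped Topology

/-- The global location for the piecewise-constant profile given by the data
`0 = s₀ < s₁ < … < s_m = 1`, `α₁ > … > α_m = 0`:
`u = (1/γ) log( (e^γ − 1) / Σ_{j=1}^m (e^{γ(s_j − α_j)} − e^{γ(s_{j−1} − α_j)}) )`. -/
noncomputable def uPW (γ : ℝ) (m : ℕ) (s α : ℕ → ℝ) : ℝ :=
  (1/γ) * Real.log ((Real.exp γ - 1) /
    ∑ j ∈ Finset.Icc 1 m,
      (Real.exp (γ*(s j - α j)) - Real.exp (γ*(s (j-1) - α j))))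

open Polynomial Real
open scoped Finset

namespace Multiset

variable {R : Type*} [CommRing R] [Nontrivial R]

theorem natDegree_prod_X_sub_C_sub_le {s t : Multiset R} (hcard : card s = card t) {r : ℕ}
    (h : ∀ i < r, s.esymm i = t.esymm i) :
    ((s.map fun x => X - C x).prod - (t.map fun x => X - C x).prod).natDegree ≤ card s - r := by
  rw [natDegree_le_iff_coeff_eq_zero]
  intro k hk
  rw [coeff_sub, sub_eq_zero]
  rcases le_or_gt k (card s) with hks | hks
  · rw [prod_X_sub_C_coeff s hks, prod_X_sub_C_coeff t (hcard ▸ hks), ← hcard, h _ (by omega)]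
  · rw [coeff_eq_zero_of_natDegree_lt, coeff_eq_zero_of_natDegree_lt] <;>
      simpa [natDegree_multiset_prod_X_sub_C_eq_card, ← hcard]

end Multiset

theorem Polynomial.natDegree_mul_prod_X_sub_C_sub_le {R ι : Type*} [CommRing R] [Nontrivial R]
    (s : Finset ι) {a₀ b₀ : R} {a b : ι → R} (hsum : a₀ + ∑ i ∈ s, a i = b₀ + ∑ i ∈ s, b i) :
    ((X - C a₀) * ∏ i ∈ s, (X - C (a i)) - (X - C b₀) * ∏ i ∈ s, (X - C (b i))).natDegree ≤
      #s - 1 := by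
  have hmultiset : ∀ (c₀ : R) (c : ι → R),
      (X - C c₀) * ∏ i ∈ s, (X - C (c i)) = ((c₀ ::ₘ s.val.map c).map (X - C ·)).prod := by
    simp [Finset.prod_map_val]
  rw [hmultiset, hmultiset]
  refine (Multiset.natDegree_prod_X_sub_C_sub_le (r := 2) (by simp) fun i hi => ?_).trans
    (by simp)
  interval_cases i
  · simp [Multiset.esymm]
  · simpa [Multiset.esymm, Multiset.powersetCard_one, Finset.sum_map_val, add_comm] using hsum

theorem Polynomial.exists_algebraMap_eq_of_aeval_eq_zero {K L : Type*} [Field K] [CommRing L]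
    [IsDomain L] [Algebra K L] {p : K[X]} (hp : p ≠ 0) {S : Finset K}
    (hS : ∀ x ∈ S, p.IsRoot x) (hcard : p.natDegree ≤ #S) {z : L} (hz : aeval z p = 0) :
    ∃ x ∈ S, algebraMap K L x = z := by
  classical
  by_contra! hzS
  set q := p.map (algebraMap K L)
  have hq : q ≠ 0 := (Polynomial.map_ne_zero_iff (algebraMap K L).injective).mpr hp
  have hsub : (insert z (S.map ⟨algebraMap K L, (algebraMap K L).injective⟩)).val ⊆ q.roots := by
    intro y hy
    rw [mem_roots hq]
    simp only [Finset.insert_val, Finset.map_val, Multiset.mem_ndinsert, Multiset.mem_map,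
      Finset.mem_val] at hy
    rcases hy with rfl | ⟨x, hx, rfl⟩
    · simpa [q, IsRoot, eval_map_algebraMap] using hz
    · simpa [q] using hS x hx
  have hcard' := card_le_degree_of_subset_roots hsub
  rw [Finset.card_insert_of_notMem (by simpa using hzS), Finset.card_map, natDegree_map] at hcard'
  omega

theorem exists_mem_Ico_eq_zero_of_mul_nonpos {f : ℝ → ℝ} (hf : Continuous f) {x y : ℝ}
    (hxy : x ≤ y) (hfxy : f x * f y ≤ 0) (hfy : f y ≠ 0) : ∃ r ∈ Ico x y, f r = 0 := by
  have hmem : (0 : ℝ) ∈ f '' Icc x y := by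
    rcases hfy.lt_or_gt with hfy | hfy
    · exact intermediate_value_Icc' hxy hf.continuousOn
        ⟨hfy.le, nonneg_of_mul_nonpos_left hfxy hfy⟩
    · exact intermediate_value_Icc hxy hf.continuousOn
        ⟨nonpos_of_mul_nonpos_left hfxy hfy, hfy.le⟩
  obtain ⟨r, ⟨hxr, hry⟩, hr⟩ := hmem
  exact ⟨r, ⟨hxr, lt_of_le_of_ne hry (by rintro rfl; exact hfy hr)⟩, hr⟩

theorem exists_finset_card_eq_of_forall_exists_mem_Ico {α : Type*} [LinearOrder α]
    {x : ℕ → α} {m : ℕ} (hx : MonotoneOn x (Icc 1 m)) {J : Finset ℕ} (hJ : J ⊆ Finset.Ico 1 m)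
    {P : α → Prop} (h : ∀ j ∈ J, ∃ r ∈ Ico (x j) (x (j + 1)), P r) :
    ∃ S : Finset α, #S = #J ∧ ∀ r ∈ S, P r := by
  classical
  have : Nonempty α := ⟨x 0⟩
  choose! g hg using h
  have hmono : StrictMonoOn g J := by
    intro i hi j hj hij
    have hi' := Finset.mem_Ico.mp (hJ hi)
    have hj' := Finset.mem_Ico.mp (hJ hj)
    calc g i < x (i + 1) := (hg i hi).1.2
      _ ≤ x j := hx ⟨by omega, by omega⟩ ⟨by omega, by omega⟩ hij
      _ ≤ g j := (hg j hj).1.1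
  refine ⟨J.image g, Finset.card_image_of_injOn hmono.injOn, ?_⟩
  simp only [Finset.mem_image, forall_exists_index, and_imp]
  rintro _ j hj rfl
  exact (hg j hj).2

theorem card_filter_mem_Ioc_le_one {α : Type*} [LinearOrder α] {x : ℕ → α} {m : ℕ}
    (hx : MonotoneOn x (Icc 1 m)) (c : α) :
    #{j ∈ Finset.Ico 1 m | x j < c ∧ c ≤ x (j + 1)} ≤ 1 := by
  have key : ∀ i ∈ Finset.Ico 1 m, ∀ j ∈ Finset.Ico 1 m, i < j → x (i + 1) ≤ x j := by
    intro i hi j hj hij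
    rw [Finset.mem_Ico] at hi hj
    exact hx ⟨by omega, by omega⟩ ⟨by omega, by omega⟩ hij
  rw [Finset.card_le_one]
  simp only [Finset.mem_filter]
  intro i ⟨hi, hic, hci⟩ j ⟨hj, hjc, hcj⟩
  by_contra hne
  rcases lt_or_gt_of_ne hne with hij | hji
  · exact (hci.trans (key i hi j hj hij)).not_gt hjc
  · exact (hcj.trans (key j hj i hi hji)).not_gt hic

theorem Finset.sum_Icc_one_sub_pred {M : Type*} [AddCommGroup M] (f : ℕ → M) (m : ℕ) :
    ∑ j ∈ Finset.Icc 1 m, (f j - f (j - 1)) = f m - f 0 := by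
  induction m with
  | zero => simp
  | succ m ih => rw [sum_Icc_succ_top (by omega), ih, Nat.add_sub_cancel]; abel

theorem mul_prod_one_sub_mul_eq {K ι : Type*} [Field K] {w : K} (hw : w ≠ 0) (c₀ : K)
    (c : ι → K) (s : Finset ι) :
    (1 - w * c₀) * ∏ j ∈ s, (1 - w * c j) =
      w ^ (#s + 1) * ((w⁻¹ - c₀) * ∏ j ∈ s, (w⁻¹ - c j)) := by
  have key : ∀ d : K, 1 - w * d = w * (w⁻¹ - d) := fun d => by rw [mul_sub, mul_inv_cancel₀ hw]
  simp only [key, Finset.prod_mul_distrib, Finset.prod_const]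
  ring

structure IsInterlacing (m : ℕ) (a b : ℕ → ℝ) : Prop where
  lt : ∀ j ∈ Icc 1 m, a j < b j
  lt_of_lt : ∀ i ∈ Icc 1 m, ∀ k ∈ Icc 1 m, i < k → b i < a k

namespace IsInterlacing

variable {m : ℕ} {a b : ℕ → ℝ}

theorem strictMonoOn (h : IsInterlacing m a b) : StrictMonoOn b (Icc 1 m) :=
  fun i hi k hk hik => (h.lt_of_lt i hi k hk hik).trans (h.lt k hk)

theorem prod_sub_mul_prod_sub_neg (h : IsInterlacing m a b) {j : ℕ} (hj : j ∈ Ico 1 m) :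
    (∏ k ∈ Finset.Icc 1 m, (b j - a k)) * ∏ k ∈ Finset.Icc 1 m, (b (j + 1) - a k) < 0 := by
  obtain ⟨hj1, hjm⟩ := hj
  have hj : j ∈ Icc 1 m := ⟨hj1, hjm.le⟩
  have hj' : j + 1 ∈ Icc 1 m := ⟨by omega, hjm⟩
  have hbj : b j < b (j + 1) := h.strictMonoOn hj hj' (by omega)
  -- `a (j + 1)` is the only `a k` lying between `b j` and `b (j + 1)`
  rw [← Finset.prod_mul_distrib, ← Finset.mul_prod_erase _ _ (Finset.mem_Icc.mpr hj')]
  refine mul_neg_of_neg_of_pos (mul_neg_of_neg_of_pos ?_ ?_) (Finset.prod_pos fun k hk => ?_)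
  · linarith [h.lt_of_lt j hj (j + 1) hj' (by omega)]
  · linarith [h.lt (j + 1) hj']
  obtain ⟨hkj, hk⟩ := Finset.mem_erase.mp hk
  have hk : k ∈ Icc 1 m := Finset.mem_Icc.mp hk
  rcases Nat.lt_or_ge j k with hjk | hkj'
  · have hak := h.lt_of_lt (j + 1) hj' k hk (by omega)
    exact mul_pos_of_neg_of_neg (by linarith) (by linarith)
  · have hbk := h.strictMonoOn.monotoneOn hk hj hkj'
    exact mul_pos (by linarith [h.lt k hk]) (by linarith [h.lt k hk])

theorem exists_finset_zeros (h : IsInterlacing m a b) {f : ℝ → ℝ} (hf : Continuous f) (c : ℝ)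
    (hfb : ∀ j ∈ Icc 1 m, f (b j) = (b j - c) * ∏ k ∈ Finset.Icc 1 m, (b j - a k)) :
    ∃ S : Finset ℝ, m - 2 ≤ #S ∧ ∀ x ∈ S, f x = 0 ∧ x ∈ Icc (b 1) (b m) := by
  classical
  -- `f` changes sign on `[b j, b (j + 1)]` unless `c ∈ (b j, b (j + 1)]`, which happens at most once
  have hsplit := Finset.card_filter_add_card_filter_not (s := Finset.Ico 1 m)
    (fun j => b j < c ∧ c ≤ b (j + 1))
  have hbad := card_filter_mem_Ioc_le_one h.strictMonoOn.monotoneOn c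
  rw [Nat.card_Ico] at hsplit
  have hzero : ∀ j ∈ {j ∈ Finset.Ico 1 m | ¬(b j < c ∧ c ≤ b (j + 1))},
      ∃ x ∈ Ico (b j) (b (j + 1)), f x = 0 ∧ x ∈ Icc (b 1) (b m) := by
    intro j hj
    obtain ⟨hjm, hjc⟩ := Finset.mem_filter.mp hj
    obtain ⟨hj1, hjm⟩ := Finset.mem_Ico.mp hjm
    have hj : j ∈ Icc 1 m := ⟨hj1, hjm.le⟩
    have hj' : j + 1 ∈ Icc 1 m := ⟨by omega, hjm⟩
    have hbj : b j < b (j + 1) := h.strictMonoOn hj hj' (by omega)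
    have hsign := h.prod_sub_mul_prod_sub_neg ⟨hj1, hjm⟩
    have hc : 0 ≤ (b j - c) * (b (j + 1) - c) ∧ b (j + 1) ≠ c := by
      rw [not_and_or, not_lt, not_le] at hjc
      rcases hjc with hcj | hjc
      · exact ⟨mul_nonneg (by linarith) (by linarith), by linarith⟩
      · exact ⟨mul_nonneg_of_nonpos_of_nonpos (by linarith) (by linarith), hjc.ne⟩
    obtain ⟨x, hx, hfx⟩ := exists_mem_Ico_eq_zero_of_mul_nonpos hf hbj.le
      (by
        rw [hfb j hj, hfb (j + 1) hj']
        nlinarith [mul_nonpos_of_nonneg_of_nonpos hc.1 hsign.le])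
      (by
        rw [hfb (j + 1) hj']
        exact mul_ne_zero (sub_ne_zero.mpr hc.2) (right_ne_zero_of_mul hsign.ne))
    refine ⟨x, hx, hfx, ?_, ?_⟩
    · exact (h.strictMonoOn.monotoneOn ⟨le_rfl, by omega⟩ hj hj1).trans hx.1
    · exact hx.2.le.trans (h.strictMonoOn.monotoneOn hj' ⟨by omega, le_rfl⟩ hjm)
  obtain ⟨S, hS, hSJ⟩ := exists_finset_card_eq_of_forall_exists_mem_Ico
    h.strictMonoOn.monotoneOn (Finset.filter_subset _ _) hzero
  exact ⟨S, by omega, hSJ⟩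

theorem exists_ofReal_eq (h : IsInterlacing m a b) (hm : 2 ≤ m) (hb : 0 < b 1) {a₀ b₀ : ℝ}
    (hsum : a₀ + ∑ j ∈ Finset.Icc 1 m, a j = b₀ + ∑ j ∈ Finset.Icc 1 m, b j)
    (hprod : a₀ * ∏ j ∈ Finset.Icc 1 m, a j = b₀ * ∏ j ∈ Finset.Icc 1 m, b j) {z : ℂ}
    (hz : (z - a₀) * ∏ j ∈ Finset.Icc 1 m, (z - a j) =
      (z - b₀) * ∏ j ∈ Finset.Icc 1 m, (z - b j)) :
    ∃ x : ℝ, (x : ℂ) = z ∧ (x = 0 ∨ x ∈ Icc (b 1) (b m)) := by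
  classical
  set F : ℝ[X] := (X - C a₀) * ∏ j ∈ Finset.Icc 1 m, (X - C (a j)) -
    (X - C b₀) * ∏ j ∈ Finset.Icc 1 m, (X - C (b j))
  have haeval : ∀ y : ℂ, aeval y F = (y - a₀) * ∏ j ∈ Finset.Icc 1 m, (y - a j) -
      (y - b₀) * ∏ j ∈ Finset.Icc 1 m, (y - b j) := by
    simp [F]
  have heval : ∀ x : ℝ, F.eval x = (x - a₀) * ∏ j ∈ Finset.Icc 1 m, (x - a j) -
      (x - b₀) * ∏ j ∈ Finset.Icc 1 m, (x - b j) := by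
    simp [F, eval_prod]
  have hdeg : F.natDegree ≤ m - 1 := by
    simpa using natDegree_mul_prod_X_sub_C_sub_le (Finset.Icc 1 m) hsum
  have hfb : ∀ j ∈ Icc 1 m, F.eval (b j) = (b j - a₀) * ∏ k ∈ Finset.Icc 1 m, (b j - a k) := by
    intro j hj
    rw [heval, Finset.prod_eq_zero (f := fun k => b j - b k) (Finset.mem_Icc.mpr hj) (sub_self _),
      mul_zero, sub_zero]
  have hF : F ≠ 0 := by
    intro hF
    have h12 := h.prod_sub_mul_prod_sub_neg (j := 1) ⟨le_rfl, by omega⟩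
    have h1 := hfb 1 ⟨le_rfl, by omega⟩
    have h2 := hfb 2 ⟨by omega, hm⟩
    rw [hF, eval_zero, eq_comm, mul_eq_zero_iff_right (left_ne_zero_of_mul h12.ne)] at h1
    rw [hF, eval_zero, eq_comm, mul_eq_zero_iff_right (right_ne_zero_of_mul h12.ne)] at h2
    exact (h.strictMonoOn ⟨le_rfl, by omega⟩ ⟨by omega, hm⟩ one_lt_two).ne (by linarith)
  have h0 : F.IsRoot 0 := by
    rw [IsRoot, heval]
    simp only [zero_sub, Finset.prod_neg]
    linear_combination -(-1) ^ #(Finset.Icc 1 m) * hprod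
  obtain ⟨S, hS, hSF⟩ := h.exists_finset_zeros F.continuous a₀ hfb
  have h0S : 0 ∉ S := fun h0 => hb.not_ge (hSF 0 h0).2.1
  obtain ⟨x, hx, rfl⟩ := exists_algebraMap_eq_of_aeval_eq_zero hF (S := insert 0 S)
    ((Finset.forall_mem_insert _ _ _).mpr ⟨h0, fun x hx => (hSF x hx).1⟩)
    (by rw [Finset.card_insert_of_notMem h0S]; omega)
    (by rw [haeval, hz, sub_self])
  refine ⟨x, rfl, ?_⟩
  rcases Finset.mem_insert.mp hx with rfl | hx
  · exact Or.inl rfl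
  · exact Or.inr (hSF x hx).2

end IsInterlacing

theorem isInterlacing_exp {γ u : ℝ} (hγ : 0 < γ) {m : ℕ} {s α : ℕ → ℝ}
    (hs : ∀ j < m, s j < s (j + 1)) (hα : ∀ j, 1 ≤ j → j < m → α (j + 1) < α j) :
    IsInterlacing m (fun j => exp (γ * (u - α j + s (j - 1))))
      (fun j => exp (γ * (u - α j + s j))) := by
  have hs' : StrictMonoOn s (Icc 0 m) :=
    strictMonoOn_of_lt_add_one ordConnected_Icc fun j _ _ hj => hs j hj.2
  have hα' : StrictAntiOn α (Icc 1 m) :=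
    strictAntiOn_of_add_one_lt ordConnected_Icc fun j _ hj hj' => hα j hj.1 hj'.2
  refine ⟨fun j ⟨hj1, hjm⟩ => ?_, fun i ⟨hi1, him⟩ k ⟨hk1, hkm⟩ hik => ?_⟩
  · have := hs' (a := j - 1) (b := j) ⟨by omega, by omega⟩ ⟨by omega, hjm⟩ (by omega)
    exact exp_lt_exp.mpr (mul_lt_mul_of_pos_left (by linarith) hγ)
  · have hsik := hs'.monotoneOn (a := i) (b := k - 1) ⟨by omega, by omega⟩
      ⟨by omega, by omega⟩ (by omega)
    have hαik := hα' ⟨hi1, him⟩ ⟨hk1, hkm⟩ hik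
    exact exp_lt_exp.mpr (mul_lt_mul_of_pos_left (by linarith) hγ)

theorem sum_exp_sub_exp_uPW {γ : ℝ} (hγ : 0 < γ) {m : ℕ} (hm : 1 ≤ m) {s α : ℕ → ℝ}
    (hs : ∀ j < m, s j < s (j + 1)) :
    ∑ j ∈ Finset.Icc 1 m, (exp (γ * (uPW γ m s α - α j + s j)) -
      exp (γ * (uPW γ m s α - α j + s (j - 1)))) = exp γ - 1 := by
  set S := ∑ j ∈ Finset.Icc 1 m, (exp (γ * (s j - α j)) - exp (γ * (s (j - 1) - α j)))
  have hS : 0 < S := by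
    refine Finset.sum_pos (fun j hj => ?_) (Finset.nonempty_Icc.mpr hm)
    have hj := Finset.mem_Icc.mp hj
    have := hs (j - 1) (by omega)
    rw [Nat.sub_add_cancel hj.1] at this
    exact sub_pos.mpr (exp_lt_exp.mpr (mul_lt_mul_of_pos_left (by linarith) hγ))
  have hγ1 : 0 < exp γ - 1 := by linarith [add_one_lt_exp hγ.ne']
  have hu : exp (γ * uPW γ m s α) * S = exp γ - 1 := by
    rw [uPW, ← mul_assoc, mul_one_div_cancel hγ.ne', one_mul, exp_log (div_pos hγ1 hS),
      div_mul_cancel₀ _ hS.ne']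
  rw [← hu, Finset.mul_sum]
  refine Finset.sum_congr rfl fun j _ => ?_
  rw [mul_sub, ← exp_add, ← exp_add]
  ring_nf

theorem exp_mul_prod_exp_eq {γ u : ℝ} {m : ℕ} {s α : ℕ → ℝ} (hs0 : s 0 = 0) (hsm : s m = 1) :
    exp γ * ∏ j ∈ Finset.Icc 1 m, exp (γ * (u - α j + s (j - 1))) =
      ∏ j ∈ Finset.Icc 1 m, exp (γ * (u - α j + s j)) := by
  rw [← exp_sum, ← exp_sum, ← exp_add, exp_eq_exp, ← eq_sub_iff_add_eq, ← Finset.sum_sub_distrib,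
    eq_comm]
  calc ∑ j ∈ Finset.Icc 1 m, (γ * (u - α j + s j) - γ * (u - α j + s (j - 1)))
      = ∑ j ∈ Finset.Icc 1 m, (γ * s j - γ * s (j - 1)) := Finset.sum_congr rfl fun j _ => by ring
    _ = γ := by rw [Finset.sum_Icc_one_sub_pred (fun j => γ * s j), hsm, hs0]; ring

/-- all complex solutions of `N_m(w) = D_m(w)` are real, and all solutions other
than `w = 0` lie in the real segment `[e^{−γ(u+1)}, e^{−γ(u−α₁)}]`. -/
theorem roots_of_Nm_eq_Dm_real_and_located
    (γ : ℝ) (hγ : 0 < γ) (m : ℕ) (hm : 2 ≤ m) (s α : ℕ → ℝ)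
    (hs0 : s 0 = 0) (hsm : s m = 1)
    (hs : ∀ j < m, s j < s (j+1))
    (hα : ∀ j, 1 ≤ j → j < m → α (j+1) < α j)
    (hαm : α m = 0) :
    ∀ w : ℂ,
      (1 - w * (Real.exp γ : ℂ)) *
          ∏ j ∈ Finset.Icc 1 m,
            (1 - w * (Real.exp (γ*(uPW γ m s α - α j + s (j-1))) : ℂ)) =
        (1 - w) *
          ∏ j ∈ Finset.Icc 1 m,
            (1 - w * (Real.exp (γ*(uPW γ m s α - α j + s j)) : ℂ)) →
      w.im = 0 ∧
      (w ≠ 0 →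
        Real.exp (-γ*(uPW γ m s α + 1)) ≤ w.re ∧
        w.re ≤ Real.exp (-γ*(uPW γ m s α - α 1))) := by
  intro w hw
  rcases eq_or_ne w 0 with rfl | hw0
  · simp
  set u := uPW γ m s α
  rw [mul_prod_one_sub_mul_eq hw0, show (1 : ℂ) - w = 1 - w * ((1 : ℝ) : ℂ) by simp,
    mul_prod_one_sub_mul_eq hw0] at hw
  have hsum := sum_exp_sub_exp_uPW (α := α) hγ (by omega) hs
  rw [Finset.sum_sub_distrib] at hsum
  obtain ⟨x, hxw, hx⟩ := (isInterlacing_exp (u := u) hγ hs hα).exists_ofReal_eq hm (exp_pos _)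
    (by linarith)
    (by rw [one_mul]; exact exp_mul_prod_exp_eq hs0 hsm)
    (mul_left_cancel₀ (pow_ne_zero _ hw0) hw)
  have hx0 : x ≠ 0 := by rintro rfl; simp [eq_comm, hw0] at hxw
  obtain ⟨hb1, hbm⟩ := hx.resolve_left hx0
  have hs1 : 0 < s 1 := hs0 ▸ hs 0 (by omega)
  obtain rfl : w = ((x⁻¹ : ℝ) : ℂ) := by rw [Complex.ofReal_inv, hxw, inv_inv]
  refine ⟨Complex.ofReal_im _, fun _ => ⟨?_, ?_⟩⟩ <;> rw [Complex.ofReal_re]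
  · calc exp (-γ * (u + 1)) = (exp (γ * (u - α m + s m)))⁻¹ := by
          rw [hαm, hsm, ← exp_neg]; ring_nf
      _ ≤ x⁻¹ := inv_anti₀ ((exp_pos _).trans_le hb1) hbm
  · calc x⁻¹ ≤ (exp (γ * (u - α 1 + s 1)))⁻¹ := inv_anti₀ (exp_pos _) hb1
      _ = exp (-γ * (u - α 1 + s 1)) := by rw [← exp_neg]; ring_nf
      _ ≤ exp (-γ * (u - α 1)) := exp_le_exp.mpr (by nlinarith)
end

section
/- Fix an integer K ≥ 1 and γ > 0. For 1 ≤ i ≤ K and 0 ≤ l ≤ K−1, let c_{i,l} be the coefficient of y^l in the polynomial (1 + y)^{i−1} (1 + e^γ y)^{K−i}. Then the determinant of the K×K matrix [c_{i,l}] (rows indexed by i = 1, …, K, columns by l = 0, …, K−1) equals (1 − e^γ)^{K(K−1)/2}. -/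
open Polynomial

/-- Key polynomial identity: expand `(1+X)^i` in the "basis" `X^j (1+aX)^{K-1-j}`. -/
lemma key_poly_identity (K : ℕ) (a : ℝ) (i : ℕ) (hi : i < K) :
    (1 + X)^i * (1 + C a * X)^(K - 1 - i)
      = ∑ j ∈ Finset.range K,
          C ((Nat.choose i j : ℝ) * (1 - a)^j) * (X^j * (1 + C a * X)^(K - 1 - j)) := by
  have hsplit : (1 + X : Polynomial ℝ) = C (1 - a) * X + (1 + C a * X) := by
    rw [map_sub, C_1]; ring
  rw [hsplit, add_pow, Finset.sum_mul]
  have hsub : Finset.range (i+1) ⊆ Finset.range K := Finset.range_subset_range.2 hi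
  rw [← Finset.sum_subset hsub (by
    intro j _ hj
    rw [Finset.mem_range, Nat.lt_succ_iff, not_le] at hj
    simp [Nat.choose_eq_zero_of_lt hj])]
  apply Finset.sum_congr rfl
  intro j hj
  have hj' : j ≤ i := Nat.lt_succ_iff.mp (Finset.mem_range.mp hj)
  have harith : (i - j) + (K - 1 - i) = K - 1 - j := by omega
  rw [← harith, pow_add, map_mul, map_pow, Polynomial.C_eq_natCast, mul_pow]
  ring

/-- let `c_{i,l}` be the coefficient of `y^l` in `(1+y)^{i−1}(1+e^γ y)^{K−i}`
(here rows `i : Fin K` correspond to the 1-based index `i+1`, columns `l : Fin K` to the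
exponent `l`). Then `det [c_{i,l}] = (1 − e^γ)^{K(K−1)/2}`. -/
theorem det_c_matrix (K : ℕ) (hK : 1 ≤ K) (γ : ℝ) (hγ : 0 < γ) :
    Matrix.det (Matrix.of fun i l : Fin K =>
      (((1 + X)^(i:ℕ) * (1 + C (Real.exp γ) * X)^(K - 1 - (i:ℕ)) : Polynomial ℝ)).coeff l)
      = (1 - Real.exp γ)^(K*(K-1)/2) := by
  set a := Real.exp γ with ha
  set L : Matrix (Fin K) (Fin K) ℝ :=
    Matrix.of fun i j => ((Nat.choose i j : ℝ) * (1 - a)^(j:ℕ)) with hL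
  set N : Matrix (Fin K) (Fin K) ℝ :=
    Matrix.of fun j l => ((X^(j:ℕ) * (1 + C a * X)^(K - 1 - (j:ℕ)) : Polynomial ℝ)).coeff l
    with hN
  have hM : (Matrix.of fun i l : Fin K =>
      (((1 + X)^(i:ℕ) * (1 + C a * X)^(K - 1 - (i:ℕ)) : Polynomial ℝ)).coeff l) = L * N := by
    ext i l
    rw [Matrix.mul_apply]
    rw [Matrix.of_apply, key_poly_identity K a i i.isLt]
    rw [finset_sum_coeff]
    rw [Finset.sum_congr rfl (fun j _ => coeff_C_mul _)]
    rw [← Fin.sum_univ_eq_sum_range (fun j =>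
      ((Nat.choose i j : ℝ) * (1 - a)^j) *
        ((X^j * (1 + C a * X)^(K - 1 - j) : Polynomial ℝ)).coeff l) K]
    rfl
  rw [hM, Matrix.det_mul]
  have hdetN : N.det = 1 := by
    have htri : ∀ i j : Fin K, j < i → N i j = 0 := by
      intro i j hij
      simp only [hN, Matrix.of_apply]
      rw [mul_comm, coeff_mul_X_pow']
      simp [not_le.mpr (show (j:ℕ) < (i:ℕ) from hij)]
    rw [Matrix.det_of_upperTriangular htri]
    apply Finset.prod_eq_one
    intro i _
    simp only [hN, Matrix.of_apply]
    rw [mul_comm, coeff_mul_X_pow', if_pos le_rfl, Nat.sub_self]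
    rw [coeff_zero_eq_eval_zero]
    simp
  have hdetL : L.det = (1 - a)^(K*(K-1)/2) := by
    have htri : ∀ i j : Fin K, i < j → L i j = 0 := by
      intro i j hij
      simp only [hL, Matrix.of_apply]
      rw [Nat.choose_eq_zero_of_lt hij]
      simp
    rw [Matrix.det_of_lowerTriangular L htri]
    have : ∀ i : Fin K, L i i = (1 - a)^(i:ℕ) := by
      intro i; simp [hL]
    rw [Finset.prod_congr rfl (fun i _ => this i)]
    rw [Finset.prod_pow_eq_pow_sum]
    congr 1
    rw [Fin.sum_univ_eq_sum_range (fun i => i) K]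
    exact Finset.sum_range_id K
  rw [hdetL, hdetN, mul_one]
end

section
/- Fix an integer K ≥ 1, γ > 0, u ∈ ℝ, and reals ξ₁ > ξ₂ > … > ξ_K. For each integer N > K set q = e^{−γ/N} and κ_j = ⌊ u·N + ξ_j·√N ⌋ for j = 1, …, K. Then lim_{N→∞} N^{−K(K−1)/4} · ∏_{1 ≤ i < j ≤ K} ( q^{κ_i − i} − q^{κ_j − j} ) / ( q^{−i} − q^{−j} ) = e^{−γ u K(K−1)/2} · ∏_{1 ≤ i < j ≤ K} (ξ_i − ξ_j)/(j − i). -/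
/-!
Each factor of the product is handled separately. With `q = e^{-γ/N}`, the factor of the pair
`i < j` equals `q^{κ_j} · (q^d - 1) / (q^{j-i} - 1)` with `d = (κ_i - i) - (κ_j - j)`. The first
term tends to `e^{-γu}`; since `e^x - 1 ∼ x` as `x → 0`, the second is asymptotic to
`d / (j - i)`, and `d / √N → ξ_i - ξ_j`. The `K(K-1)/2` factors `N^{-1/2}` make up the prefactor.
-/
open Filter Asymptotics Finset
open scoped Topology

theorem Real.isEquivalent_exp_sub_one : (fun x : ℝ => Real.exp x - 1) ~[𝓝 0] id := by
  have h := hasDerivAt_iff_isLittleO_nhds_zero.mp (Real.hasDerivAt_exp 0)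
  simp only [zero_add, Real.exp_zero, smul_eq_mul, mul_one] at h
  exact h

theorem Real.exp_zpow (t : ℝ) (n : ℤ) : Real.exp t ^ n = Real.exp (t * n) := by
  rw [← Real.rpow_intCast, ← Real.exp_mul]

section FloorAsymptotics

variable {α : Type*} {l : Filter α} {g : α → ℝ}

theorem tendsto_fract_div_atTop (f : α → ℝ) (hg : Tendsto g l atTop) :
    Tendsto (fun n => Int.fract (f n) / g n) l (𝓝 0) := by
  refine tendsto_of_tendsto_of_tendsto_of_le_of_le' tendsto_const_nhds
    (tendsto_inv_atTop_zero.comp hg) ?_ ?_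
  all_goals filter_upwards [hg.eventually_gt_atTop 0] with n hn
  · exact div_nonneg (Int.fract_nonneg _) hn.le
  · simp only [Function.comp_apply, inv_eq_one_div]
    gcongr
    exact (Int.fract_lt_one _).le

theorem tendsto_floor_div_atTop {f : α → ℝ} {c : ℝ} (hg : Tendsto g l atTop)
    (hf : Tendsto (fun n => f n / g n) l (𝓝 c)) :
    Tendsto (fun n => (⌊f n⌋ : ℝ) / g n) l (𝓝 c) := by
  simpa [← Int.self_sub_fract, sub_div] using hf.sub (tendsto_fract_div_atTop f hg)

theorem tendsto_floor_sub_floor_div_atTop {f₁ f₂ : α → ℝ} {c : ℝ} (hg : Tendsto g l atTop)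
    (hf : Tendsto (fun n => (f₁ n - f₂ n) / g n) l (𝓝 c)) :
    Tendsto (fun n => ((⌊f₁ n⌋ - ⌊f₂ n⌋ : ℤ) : ℝ) / g n) l (𝓝 c) := by
  have h := (hf.sub (tendsto_fract_div_atTop f₁ hg)).add (tendsto_fract_div_atTop f₂ hg)
  rw [sub_zero, add_zero] at h
  refine h.congr fun n => ?_
  push_cast
  rw [← Int.self_sub_fract, ← Int.self_sub_fract]
  ring

end FloorAsymptotics

theorem tendsto_sqrt_natCast_atTop : Tendsto (fun N : ℕ => √(N : ℝ)) atTop atTop :=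
  Real.tendsto_sqrt_atTop.comp tendsto_natCast_atTop_atTop

theorem tendsto_floor_mul_add_mul_sqrt_div (u a : ℝ) :
    Tendsto (fun N : ℕ => (⌊u * N + a * √N⌋ : ℝ) / N) atTop (𝓝 u) := by
  refine tendsto_floor_div_atTop tendsto_natCast_atTop_atTop ?_
  have h := (tendsto_inv_atTop_zero.comp tendsto_sqrt_natCast_atTop).const_mul a
  rw [mul_zero] at h
  refine (add_zero u ▸ h.const_add u).congr' ?_
  filter_upwards [eventually_gt_atTop 0] with N hN
  have hN' : (N : ℝ) ≠ 0 := by positivity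
  simp only [Function.comp_apply]
  rw [add_div, mul_div_cancel_right₀ _ hN', mul_div_assoc, Real.sqrt_div_self', one_div]

theorem tendsto_floor_sub_floor_add_div_sqrt (u a b : ℝ) (m : ℤ) :
    Tendsto (fun N : ℕ => ((⌊u * N + a * √N⌋ - ⌊u * N + b * √N⌋ + m : ℤ) : ℝ) / √N)
      atTop (𝓝 (a - b)) := by
  have hm := (tendsto_inv_atTop_zero.comp tendsto_sqrt_natCast_atTop).const_mul (m : ℝ)
  rw [mul_zero] at hm
  have h := tendsto_floor_sub_floor_div_atTop (f₁ := fun N : ℕ => u * N + a * √N)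
    (f₂ := fun N : ℕ => u * N + b * √N) (c := a - b) tendsto_sqrt_natCast_atTop ?_
  · refine (add_zero (a - b) ▸ h.add hm).congr fun N => ?_
    simp only [Function.comp_apply]
    push_cast
    ring
  refine tendsto_const_nhds.congr' ?_
  filter_upwards [eventually_gt_atTop 0] with N hN
  have hpos : 0 < √(N : ℝ) := Real.sqrt_pos.mpr (by exact_mod_cast hN)
  field_simp
  ring

-- No hypothesis on `q ^ (c - e)` is needed: if it is `1`, both sides are `0`.
theorem zpow_sub_zpow_div_zpow_sub_zpow {F : Type*} [Field F] {q : F} (hq : q ≠ 0) (a b c e : ℤ) :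
    (q ^ a - q ^ b) / (q ^ c - q ^ e) = q ^ (b - e) * ((q ^ (a - b) - 1) / (q ^ (c - e) - 1)) := by
  have ha : q ^ a = q ^ b * q ^ (a - b) := by rw [← zpow_add₀ hq]; ring_nf
  have hc : q ^ c = q ^ e * q ^ (c - e) := by rw [← zpow_add₀ hq]; ring_nf
  rw [ha, hc, ← mul_sub_one, ← mul_sub_one, mul_div_mul_comm, ← zpow_sub₀ hq]

theorem tendsto_inv_sqrt_mul_exp_sub_one_div {γ : ℝ} (hγ : γ ≠ 0) {d : ℕ → ℝ} {c : ℝ} (m : ℝ)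
    (hd : Tendsto (fun N => d N / √N) atTop (𝓝 c)) :
    Tendsto (fun N : ℕ =>
      (√N)⁻¹ * ((Real.exp (-γ / N * d N) - 1) / (Real.exp (-γ / N * m) - 1)))
      atTop (𝓝 (c / m)) := by
  have hinv := tendsto_inv_atTop_zero.comp tendsto_sqrt_natCast_atTop
  have hx : Tendsto (fun N : ℕ => -γ / N * d N) atTop (𝓝 0) := by
    have h := (hd.const_mul (-γ)).mul hinv
    rw [mul_zero] at h
    refine h.congr fun N => ?_
    simp only [Function.comp_apply]
    conv_rhs => rw [← Real.mul_self_sqrt N.cast_nonneg]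
    ring
  have hy : Tendsto (fun N : ℕ => -γ / N * m) atTop (𝓝 0) := by
    simpa using (tendsto_const_div_atTop_nhds_zero_nat (-γ)).mul_const m
  have hequiv := (IsEquivalent.refl : (fun N : ℕ => (√(N : ℝ))⁻¹) ~[atTop] _).mul
    ((Real.isEquivalent_exp_sub_one.comp_tendsto hx).div
      (Real.isEquivalent_exp_sub_one.comp_tendsto hy))
  refine hequiv.symm.tendsto_nhds ((hd.div_const m).congr' ?_)
  filter_upwards [eventually_gt_atTop 0] with N hN
  have hγN : -γ / N ≠ 0 := div_ne_zero (neg_ne_zero.mpr hγ) (by positivity)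
  simp only [Pi.mul_apply, Pi.div_apply, Function.comp_apply, id, mul_div_mul_left _ _ hγN]
  ring

theorem tendsto_schur_pair_factor {γ : ℝ} (hγ : γ ≠ 0) (u a b : ℝ) (i j : ℤ) :
    Tendsto (fun N : ℕ => (√N)⁻¹ *
      (((Real.exp (-γ / N)) ^ (⌊u * N + a * √N⌋ - i) -
          (Real.exp (-γ / N)) ^ (⌊u * N + b * √N⌋ - j)) /
        ((Real.exp (-γ / N)) ^ (-i) - (Real.exp (-γ / N)) ^ (-j))))
      atTop (𝓝 (Real.exp (-γ * u) * ((a - b) / (j - i)))) := by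
  have hq : Tendsto (fun N : ℕ => Real.exp (-γ / N * ⌊u * N + b * √N⌋)) atTop
      (𝓝 (Real.exp (-γ * u))) := by
    refine (Real.continuous_exp.tendsto _).comp
      (((tendsto_floor_mul_add_mul_sqrt_div u b).const_mul (-γ)).congr fun N => ?_)
    ring
  have hratio := tendsto_inv_sqrt_mul_exp_sub_one_div hγ ((j : ℝ) - i)
    (tendsto_floor_sub_floor_add_div_sqrt u a b (j - i))
  refine (hq.mul hratio).congr fun N => ?_
  rw [zpow_sub_zpow_div_zpow_sub_zpow (Real.exp_pos _).ne']
  simp only [Real.exp_zpow]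
  push_cast
  ring_nf

theorem Fin.card_filter_fst_lt_snd (K : ℕ) :
    2 * #{p : Fin K × Fin K | p.1 < p.2} = K * (K - 1) := by
  rw [card_filter, Fintype.sum_prod_type_right]
  simp only [sum_boole, Nat.cast_id, filter_gt_eq_Iio, Fin.card_Iio]
  rw [Fin.sum_univ_eq_sum_range (fun j => j) K, mul_comm, sum_range_id_mul_two]

theorem schur_prefactor_asymptotics_general (K : ℕ) (γ u : ℝ) (hγ : 0 < γ)
    (ξ : Fin K → ℝ) :
    Tendsto (fun N : ℕ =>
      (N:ℝ) ^ (-(((K*(K-1) : ℕ) : ℝ))/4) *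
        ∏ p ∈ Finset.univ.filter (fun p : Fin K × Fin K => p.1 < p.2),
          ((Real.exp (-γ/N)) ^ (⌊u*N + ξ p.1 * Real.sqrt N⌋ - (((p.1:ℕ)+1 : ℕ) : ℤ)) -
            (Real.exp (-γ/N)) ^ (⌊u*N + ξ p.2 * Real.sqrt N⌋ - (((p.2:ℕ)+1 : ℕ) : ℤ))) /
          ((Real.exp (-γ/N)) ^ (-((((p.1:ℕ)+1 : ℕ)) : ℤ)) -
            (Real.exp (-γ/N)) ^ (-((((p.2:ℕ)+1 : ℕ)) : ℤ))))
      atTop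
      (𝓝 (Real.exp (-γ*u*((K*(K-1) : ℕ) : ℝ)/2) *
        ∏ p ∈ Finset.univ.filter (fun p : Fin K × Fin K => p.1 < p.2),
          (ξ p.1 - ξ p.2) / (((p.2:ℕ) : ℝ) - ((p.1:ℕ) : ℝ)))) := by
  set P := ({p : Fin K × Fin K | p.1 < p.2} : Finset _)
  have hcard : ((K * (K - 1) : ℕ) : ℝ) = 2 * #P := by
    exact_mod_cast (Fin.card_filter_fst_lt_snd K).symm
  have hpow (x : ℝ) (hx : 0 ≤ x) : x ^ (-(2 * #P : ℝ) / 4) = (√x)⁻¹ ^ #P := by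
    rw [Real.sqrt_eq_rpow, ← Real.rpow_neg hx, ← Real.rpow_natCast, ← Real.rpow_mul hx]
    ring_nf
  have hpair (p : Fin K × Fin K) (_ : p ∈ P) := tendsto_schur_pair_factor hγ.ne' u (ξ p.1) (ξ p.2)
    (((p.1 : ℕ) + 1 : ℕ) : ℤ) (((p.2 : ℕ) + 1 : ℕ) : ℤ)
  convert tendsto_finsetProd P hpair using 2 with N
  · rw [prod_mul_distrib, prod_const, hcard, hpow _ N.cast_nonneg]
  · rw [prod_mul_distrib, prod_const, ← Real.exp_nat_mul, hcard]
    push_cast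
    ring_nf

/-- asymptotics of the principal specialization of the Schur polynomial
`s_κ(1,q,…,q^{K−1}) = ∏_{1≤i<j≤K} (q^{κ_i−i} − q^{κ_j−j})/(q^{−i} − q^{−j})` when
`q = e^{−γ/N}` and `κ_j = ⌊uN + ξ_j √N⌋` (here `p : Fin K` represents the 1-based
index `p+1`). -/
theorem schur_prefactor_asymptotics (K : ℕ) (hK : 1 ≤ K) (γ u : ℝ) (hγ : 0 < γ)
    (ξ : Fin K → ℝ) (hξ : ∀ i j : Fin K, i < j → ξ j < ξ i) :
    Tendsto (fun N : ℕ =>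
      (N:ℝ) ^ (-(((K*(K-1) : ℕ) : ℝ))/4) *
        ∏ p ∈ Finset.univ.filter (fun p : Fin K × Fin K => p.1 < p.2),
          ((Real.exp (-γ/N)) ^ (⌊u*N + ξ p.1 * Real.sqrt N⌋ - (((p.1:ℕ)+1 : ℕ) : ℤ)) -
            (Real.exp (-γ/N)) ^ (⌊u*N + ξ p.2 * Real.sqrt N⌋ - (((p.2:ℕ)+1 : ℕ) : ℤ))) /
          ((Real.exp (-γ/N)) ^ (-((((p.1:ℕ)+1 : ℕ)) : ℤ)) -
            (Real.exp (-γ/N)) ^ (-((((p.2:ℕ)+1 : ℕ)) : ℤ))))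
      atTop
      (𝓝 (Real.exp (-γ*u*((K*(K-1) : ℕ) : ℝ)/2) *
        ∏ p ∈ Finset.univ.filter (fun p : Fin K × Fin K => p.1 < p.2),
          (ξ p.1 - ξ p.2) / (((p.2:ℕ) : ℝ) - ((p.1:ℕ) : ℝ)))) :=
  schur_prefactor_asymptotics_general K γ u hγ ξ
end

section
/- Let f(s) = 1 − s for s ∈ [0,1], and for γ > 0 let u(γ) = u(γ, f) and σ²(γ) = σ²(γ, f) be the corresponding global location and limiting variance. Then lim_{γ→+∞} γ·u(γ) = log 2 and lim_{γ→+∞} γ·σ²(γ) = 1/2. -/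
open MeasureTheory Filter Set
open scoped Topology

open Real

lemma integral_exp_mul_add {c : ℝ} (hc : c ≠ 0) (d : ℝ) :
    ∫ s in (0:ℝ)..1, exp (c * s + d) = exp d * (exp c - 1) / c := by
  simp_rw [exp_add, intervalIntegral.integral_mul_const,
    intervalIntegral.integral_comp_mul_left exp hc, integral_exp]
  simp only [mul_one, mul_zero, exp_zero, smul_eq_mul]
  ring

lemma exp_ofNat_mul (n : ℕ) [n.AtLeastTwo] (x : ℝ) : exp (ofNat(n) * x) = exp x ^ n := by
  exact_mod_cast exp_nat_mul x n

lemma mul_uLoc_one_sub {γ : ℝ} (hγ : γ ≠ 0) :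
    γ * uLoc γ (fun s => 1 - s) = log (2 / (1 + exp (-γ))) := by
  have hnum : ∫ s in (0:ℝ)..1, exp (γ * s) = (exp γ - 1) / γ := by
    simpa using integral_exp_mul_add hγ 0
  have hden : ∫ s in (0:ℝ)..1, exp (γ * (s - (1 - s))) =
      exp (-γ) * (exp (2 * γ) - 1) / (2 * γ) := by
    simpa only [← integral_exp_mul_add (mul_ne_zero two_ne_zero hγ)] using
      intervalIntegral.integral_congr fun s _ => by ring_nf
  have hx : exp γ - 1 ≠ 0 := sub_ne_zero.2 (by simpa using hγ)
  rw [uLoc, hnum, hden, exp_neg, exp_ofNat_mul, one_div, mul_inv_cancel_left₀ hγ,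
    show exp γ ^ 2 - 1 = (exp γ - 1) * (exp γ + 1) by ring]
  congr 1
  field_simp

lemma mul_sigmaSq_one_sub {γ : ℝ} (hγ : γ ≠ 0) :
    γ * sigmaSq γ (fun s => 1 - s) = (1 - exp (-γ)) / (2 * (1 + exp (-γ))) := by
  set u := uLoc γ (fun s => 1 - s)
  have hu : exp (γ * u) = 2 / (1 + exp (-γ)) := by
    rw [mul_uLoc_one_sub hγ, exp_log (by positivity)]
  have hshift : ∫ s in (0:ℝ)..1, exp (2 * γ * (u + s - (1 - s))) =
      exp (γ * u) ^ 2 * exp (-γ) ^ 2 * (exp (4 * γ) - 1) / (4 * γ) := by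
    rw [← exp_nat_mul, ← exp_nat_mul, ← exp_add,
      ← integral_exp_mul_add (mul_ne_zero four_ne_zero hγ)]
    exact intervalIntegral.integral_congr fun s _ => by push_cast; ring_nf
  have hbase : ∫ s in (0:ℝ)..1, exp (2 * γ * s) = (exp (2 * γ) - 1) / (2 * γ) := by
    simpa using integral_exp_mul_add (mul_ne_zero two_ne_zero hγ) 0
  have hx : exp γ - 1 ≠ 0 := sub_ne_zero.2 (by simpa using hγ)
  rw [sigmaSq, intervalIntegral.integral_sub (Continuous.intervalIntegrable (by fun_prop) _ _)
    (Continuous.intervalIntegrable (by fun_prop) _ _), hshift, hbase, hu,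
    exp_ofNat_mul, exp_ofNat_mul, exp_neg]
  field_simp
  ring

/-- for `f(s) = 1 − s`, `γ·u(γ) → log 2` and `γ·σ²(γ) → 1/2` as `γ → +∞`. -/
theorem asymptotics_linear_profile :
    Tendsto (fun γ : ℝ => γ * uLoc γ (fun s => 1 - s)) atTop (𝓝 (Real.log 2)) ∧
    Tendsto (fun γ : ℝ => γ * sigmaSq γ (fun s => 1 - s)) atTop (𝓝 (1/2)) := by
  have hne : ∀ᶠ γ : ℝ in atTop, γ ≠ 0 := eventually_ne_atTop 0
  constructor
  · have hlim : ContinuousAt (fun t : ℝ => log (2 / (1 + t))) 0 := by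
      fun_prop (disch := norm_num)
    convert (hlim.tendsto.comp tendsto_exp_neg_atTop_nhds_zero).congr' ?_ using 2
    · norm_num
    · filter_upwards [hne] with γ hγ using (mul_uLoc_one_sub hγ).symm
  · have hlim : ContinuousAt (fun t : ℝ => (1 - t) / (2 * (1 + t))) 0 := by
      fun_prop (disch := norm_num)
    convert (hlim.tendsto.comp tendsto_exp_neg_atTop_nhds_zero).congr' ?_ using 2
    · norm_num
    · filter_upwards [hne] with γ hγ using (mul_sigmaSq_one_sub hγ).symm
end

section
/- Let f(s) = 1 for 0 ≤ s ≤ 1/2 and f(s) = 0 for 1/2 < s ≤ 1, and for γ > 0 let u(γ) = u(γ, f) and σ²(γ) = σ²(γ, f) be the corresponding global location and limiting variance. Then lim_{γ→+∞} γ·e^{γ/2}·u(γ) = 1 and lim_{γ→+∞} γ·e^{γ/2}·σ²(γ) = 1; that is, u(γ) ∼ e^{−γ/2}/γ and σ²(γ) ∼ e^{−γ/2}/γ as γ → +∞. -/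
open MeasureTheory Filter Set
open scoped Topology

/-!
With `y = e^{-γ/2}` every integral is elementary. The ratio inside the logarithm defining `u`
equals `1 / (1 - y + y²)`, so `γ e^{γ/2} u = -log (1 - y + y²) / y`, a difference quotient of
`log (1 - y + y²)` at `0`, whose derivative there is `-1`. Likewise
`γ e^{γ/2} σ² = (1 + y²)(1 - y) / ((1 + y)(1 - y + y²)²)`, which is continuous at `y = 0`
with value `1`; and `y → 0⁺` as `γ → ∞`.
-/

open Real

theorem integral_exp_mul {c : ℝ} (hc : c ≠ 0) (a b : ℝ) :
    ∫ s in a..b, exp (c * s) = (exp (c * b) - exp (c * a)) / c := by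
  rw [intervalIntegral.integral_comp_mul_left (fun x => exp x) hc, integral_exp, smul_eq_mul]
  field_simp

section StepFunction

variable {g₁ g₂ : ℝ → ℝ} {a b c : ℝ}

theorem eqOn_ite_le_left (hab : a ≤ b) :
    EqOn (fun s => if s ≤ b then g₁ s else g₂ s) g₁ (uIoc a b) := by
  intro s hs
  rw [uIoc_of_le hab] at hs
  simp [hs.2]

theorem eqOn_ite_le_right (hbc : b ≤ c) :
    EqOn (fun s => if s ≤ b then g₁ s else g₂ s) g₂ (uIoc b c) := by
  intro s hs
  rw [uIoc_of_le hbc] at hs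
  simp [not_le.2 hs.1]

theorem IntervalIntegrable.ite_le (hab : a ≤ b) (hbc : b ≤ c)
    (h₁ : IntervalIntegrable g₁ volume a b) (h₂ : IntervalIntegrable g₂ volume b c) :
    IntervalIntegrable (fun s => if s ≤ b then g₁ s else g₂ s) volume a c :=
  (h₁.congr (eqOn_ite_le_left hab).symm).trans (h₂.congr (eqOn_ite_le_right hbc).symm)

theorem intervalIntegral.integral_ite_le (hab : a ≤ b) (hbc : b ≤ c)
    (h₁ : IntervalIntegrable g₁ volume a b) (h₂ : IntervalIntegrable g₂ volume b c) :
    ∫ s in a..c, (if s ≤ b then g₁ s else g₂ s) =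
      (∫ s in a..b, g₁ s) + ∫ s in b..c, g₂ s := by
  rw [← intervalIntegral.integral_add_adjacent_intervals
      (h₁.congr (eqOn_ite_le_left hab).symm) (h₂.congr (eqOn_ite_le_right hbc).symm),
    intervalIntegral.integral_congr_ae (Eventually.of_forall fun s hs => eqOn_ite_le_left hab hs),
    intervalIntegral.integral_congr_ae (Eventually.of_forall fun s hs => eqOn_ite_le_right hbc hs)]

end StepFunction

noncomputable def hexagonProfile : ℝ → ℝ := fun s => if s ≤ 1/2 then 1 else 0

theorem exp_mul_add_sub_hexagonProfile_eq_ite (c d : ℝ) :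
    (fun s => exp (c * (d + s - hexagonProfile s))) =
      fun s => if s ≤ 1/2 then exp (c * (d - 1)) * exp (c * s)
        else exp (c * d) * exp (c * s) := by
  ext s
  unfold hexagonProfile
  split_ifs <;> rw [← exp_add] <;> ring_nf

theorem intervalIntegrable_exp_mul_add_sub_hexagonProfile (c d : ℝ) :
    IntervalIntegrable (fun s => exp (c * (d + s - hexagonProfile s))) volume 0 1 := by
  rw [exp_mul_add_sub_hexagonProfile_eq_ite]
  exact IntervalIntegrable.ite_le (by norm_num) (by norm_num)
    ((by fun_prop : Continuous _).intervalIntegrable _ _)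
    ((by fun_prop : Continuous _).intervalIntegrable _ _)

theorem integral_exp_mul_add_sub_hexagonProfile {c : ℝ} (hc : c ≠ 0) (d : ℝ) :
    ∫ s in (0:ℝ)..1, exp (c * (d + s - hexagonProfile s)) =
      exp (c * d) * (exp (-c) * (exp (c / 2) - 1) + exp c - exp (c / 2)) / c := by
  rw [exp_mul_add_sub_hexagonProfile_eq_ite,
    intervalIntegral.integral_ite_le (by norm_num) (by norm_num)
      ((by fun_prop : Continuous _).intervalIntegrable _ _)
      ((by fun_prop : Continuous _).intervalIntegrable _ _),
    intervalIntegral.integral_const_mul, intervalIntegral.integral_const_mul, integral_exp_mul hc,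
    integral_exp_mul hc, mul_sub, exp_sub, mul_zero, mul_one, mul_one_div, exp_zero, exp_neg]
  field_simp
  ring

theorem exp_half_eq_exp_neg_half_inv (t : ℝ) : exp (t / 2) = (exp (-(t / 2)))⁻¹ := by
  rw [exp_neg, inv_inv]

theorem uLoc_hexagonProfile {γ : ℝ} (hγ : 0 < γ) :
    uLoc γ hexagonProfile = -log (1 - exp (-(γ / 2)) + exp (-(γ / 2)) ^ 2) / γ := by
  set y := exp (-(γ / 2)) with hy_def
  have hy : 0 < y := exp_pos _
  have hq : 0 < 1 - y + y ^ 2 := by nlinarith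
  have e1 : exp γ = (y ^ 2)⁻¹ := by rw [hy_def, ← exp_nat_mul, ← exp_neg]; ring_nf
  have e2 : exp (-γ) = y ^ 2 := by rw [hy_def, ← exp_nat_mul]; ring_nf
  have hstep : ∫ s in (0:ℝ)..1, exp (γ * (s - hexagonProfile s)) =
      (1 - y) * (1 + y) * (1 - y + y ^ 2) / (y ^ 2 * γ) := by
    have h := integral_exp_mul_add_sub_hexagonProfile hγ.ne' 0
    simp only [zero_add, mul_zero, exp_zero, one_mul] at h
    rw [h, e1, e2, exp_half_eq_exp_neg_half_inv]
    field_simp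
    ring
  have hflat : ∫ s in (0:ℝ)..1, exp (γ * s) = (1 - y) * (1 + y) / (y ^ 2 * γ) := by
    rw [integral_exp_mul hγ.ne', mul_one, mul_zero, exp_zero, e1]
    field_simp
    ring
  have hy1 : 0 < 1 - y := sub_pos.2 (exp_lt_one_iff.2 (by linarith))
  rw [uLoc, hstep, hflat]
  field_simp
  rw [one_div, log_inv]

theorem sigmaSq_hexagonProfile {γ : ℝ} (hγ : 0 < γ) :
    sigmaSq γ hexagonProfile =
      exp (-(γ / 2)) * (1 + exp (-(γ / 2)) ^ 2) * (1 - exp (-(γ / 2))) /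
      ((1 + exp (-(γ / 2))) * (1 - exp (-(γ / 2)) + exp (-(γ / 2)) ^ 2) ^ 2 * γ) := by
  set y := exp (-(γ / 2)) with hy_def
  have hy : 0 < y := exp_pos _
  have hq : 0 < 1 - y + y ^ 2 := by nlinarith
  have hy1 : 0 < 1 - y := sub_pos.2 (exp_lt_one_iff.2 (by linarith))
  have h2γ : 2 * γ ≠ 0 := by positivity
  have e1 : exp γ = (y ^ 2)⁻¹ := by rw [hy_def, ← exp_nat_mul, ← exp_neg]; ring_nf
  have e2 : exp (2 * γ) = (y ^ 4)⁻¹ := by rw [hy_def, ← exp_nat_mul, ← exp_neg]; ring_nf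
  have e3 : exp (-(2 * γ)) = y ^ 4 := by rw [hy_def, ← exp_nat_mul]; ring_nf
  have hu : exp (2 * γ * uLoc γ hexagonProfile) = ((1 - y + y ^ 2) ^ 2)⁻¹ := by
    rw [uLoc_hexagonProfile hγ, ← hy_def, ← exp_log (pow_pos hq 2), ← exp_neg, log_pow]
    congr 1
    field_simp
    push_cast
    ring
  have hstep : ∫ s in (0:ℝ)..1, exp (2 * γ * (uLoc γ hexagonProfile + s - hexagonProfile s)) =
      (1 - y) * (1 + y) * (1 + y ^ 2) * (1 - y ^ 2 + y ^ 4) /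
        ((1 - y + y ^ 2) ^ 2 * y ^ 4 * (2 * γ)) := by
    rw [integral_exp_mul_add_sub_hexagonProfile h2γ, hu, e2, e3,
      mul_div_cancel_left₀ _ two_ne_zero, e1]
    field_simp
    ring
  have hflat : ∫ s in (0:ℝ)..1, exp (2 * γ * s) =
      (1 - y) * (1 + y) * (1 + y ^ 2) / (y ^ 4 * (2 * γ)) := by
    rw [integral_exp_mul h2γ, mul_one, mul_zero, exp_zero, e2]
    field_simp
    ring
  rw [sigmaSq, intervalIntegral.integral_sub (intervalIntegrable_exp_mul_add_sub_hexagonProfile _ _)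
    ((by fun_prop : Continuous _).intervalIntegrable _ _), hstep, hflat,
    show exp γ - 1 = (1 - y) * (1 + y) / y ^ 2 by rw [e1]; field_simp; ring]
  field_simp
  ring

theorem tendsto_exp_neg_half_atTop : Tendsto (fun γ : ℝ => exp (-(γ / 2))) atTop (𝓝[>] 0) :=
  tendsto_exp_atBot_nhdsGT.comp (tendsto_neg_atTop_atBot.comp (tendsto_id.atTop_div_const two_pos))

theorem hasDerivAt_log_one_sub_add_sq :
    HasDerivAt (fun y : ℝ => log (1 - y + y ^ 2)) (-1) 0 := by
  have h : HasDerivAt (fun y : ℝ => 1 - y + y ^ 2) (-1) 0 := by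
    simpa using ((hasDerivAt_id (0 : ℝ)).const_sub 1).fun_add (hasDerivAt_pow 2 (0 : ℝ))
  simpa using h.log (by norm_num)

theorem tendsto_neg_log_one_sub_add_sq_div :
    Tendsto (fun y : ℝ => -log (1 - y + y ^ 2) / y) (𝓝[≠] 0) (𝓝 1) := by
  have h := (hasDerivAt_iff_tendsto_slope.mp hasDerivAt_log_one_sub_add_sq).neg
  rw [neg_neg] at h
  refine h.congr fun y => ?_
  simp [slope_def_field, neg_div]

theorem tendsto_mul_exp_half_mul_uLoc_hexagonProfile :
    Tendsto (fun γ => γ * exp (γ / 2) * uLoc γ hexagonProfile) atTop (𝓝 1) := by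
  refine (tendsto_neg_log_one_sub_add_sq_div.comp
    (tendsto_nhdsWithin_mono_right (fun _ hy => ne_of_gt hy) tendsto_exp_neg_half_atTop)).congr' ?_
  filter_upwards [eventually_gt_atTop 0] with γ hγ
  rw [Function.comp_apply, uLoc_hexagonProfile hγ, exp_half_eq_exp_neg_half_inv]
  field_simp

theorem tendsto_mul_exp_half_mul_sigmaSq_hexagonProfile :
    Tendsto (fun γ => γ * exp (γ / 2) * sigmaSq γ hexagonProfile) atTop (𝓝 1) := by
  have hcont : ContinuousAt
      (fun y : ℝ => (1 + y ^ 2) * (1 - y) / ((1 + y) * (1 - y + y ^ 2) ^ 2)) 0 :=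
    ContinuousAt.div (by fun_prop) (by fun_prop) (by norm_num)
  have hlim : Tendsto (fun y : ℝ => (1 + y ^ 2) * (1 - y) / ((1 + y) * (1 - y + y ^ 2) ^ 2))
      (𝓝 0) (𝓝 1) := by
    simpa using hcont.tendsto
  refine (hlim.comp (tendsto_exp_neg_half_atTop.mono_right nhdsWithin_le_nhds)).congr' ?_
  filter_upwards [eventually_gt_atTop 0] with γ hγ
  rw [Function.comp_apply, sigmaSq_hexagonProfile hγ, exp_half_eq_exp_neg_half_inv]
  have : 0 < exp (-(γ / 2)) := exp_pos _
  field_simp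

/-- for the hexagonal profile `f = 1` on `[0,1/2]`, `0` on `(1/2,1]`,
`γ e^{γ/2} u(γ) → 1` and `γ e^{γ/2} σ²(γ) → 1` as `γ → +∞`. -/
theorem asymptotics_hexagon_profile :
    Tendsto (fun γ : ℝ =>
        γ * Real.exp (γ/2) * uLoc γ (fun s => if s ≤ 1/2 then 1 else 0))
      atTop (𝓝 1) ∧
    Tendsto (fun γ : ℝ =>
        γ * Real.exp (γ/2) * sigmaSq γ (fun s => if s ≤ 1/2 then 1 else 0))
      atTop (𝓝 1) :=
  ⟨tendsto_mul_exp_half_mul_uLoc_hexagonProfile,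
    tendsto_mul_exp_half_mul_sigmaSq_hexagonProfile⟩
end
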